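/- arXiv:1812.03775 — 3 statements merged into one kernel-verified Lean document; each statement's English description precedes it below -/
import Mathlib

section
/- Let Σ be a symmetric positive definite p × p real matrix, μ ∈ ℝ^p, p₁, p₋₁ > 0 with p₁ + p₋₁ = 1, and β ∈ ℝ^p with β ≠ 0. Set a = β^T μ / √(β^T Σ β). Let F₁ and F₋₁ be the CDFs of the one-dimensional Gaussian measures with means β^T μ and −β^T μ respectively, both with variance β^T Σ β; let ν = p₁·N(β^T μ, β^T Σ β) + p₋₁·N(−β^T μ, β^T Σ β) be the mixture measure and F = p₁F₁ + p₋₁F₋₁ its CDF. Then p₁·∫(F₁ − F)² dν + p₋₁·∫(F₋₁ − F)² dν = p₁·p₋₁·∫_ℝ ( Φ(t) − Φ(t + 2a) )² dγ₀(t). -/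
/-!
Put `m = βᵀμ` and `s = √(βᵀΣβ) > 0`. Since `p₁ + p₋₁ = 1`, the deviations `F₁ - F` and
`F₋₁ - F` are `p₋₁ (F₁ - F₋₁)` and `-p₁ (F₁ - F₋₁)`, so the left side is
`p₁ p₋₁ ∫ (F₁ - F₋₁)² dν`. On the component `N(±m, s²)` of `ν` the substitution `z = s t ± m`
turns `(F₁ - F₋₁)²` into `(Φ t - Φ (t ± 2a))²` under `γ₀`, and the two signs give the same
integral because `γ₀` is symmetric and `Φ (-x) = 1 - Φ x`.
-/

open MeasureTheory ProbabilityTheory Matrix Set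
open scoped NNReal

noncomputable def stdGaussianCDF (t : ℝ) : ℝ :=
  ((gaussianReal 0 1) (Set.Iic t)).toReal

lemma stdGaussianCDF_neg (x : ℝ) : stdGaussianCDF (-x) = 1 - stdGaussianCDF x := by
  have : NullSingletonClass (gaussianReal 0 1) := nullSingletonClass_gaussianReal one_ne_zero
  calc stdGaussianCDF (-x) = (gaussianReal 0 1).real (Ici x) := by
        rw [stdGaussianCDF, ← measureReal_def]
        conv_lhs => rw [← neg_zero, ← gaussianReal_map_neg]
        rw [map_measureReal_apply measurable_neg measurableSet_Iic, neg_preimage, neg_Iic, neg_neg]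
    _ = (gaussianReal 0 1).real (Iic x)ᶜ := by rw [compl_Iic, measureReal_congr Ioi_ae_eq_Ici]
    _ = 1 - stdGaussianCDF x := probReal_compl_eq_one_sub measurableSet_Iic

lemma gaussianReal_zero_one_map_affine (m : ℝ) (v : ℝ≥0) :
    (gaussianReal 0 1).map (fun t => √v * t + m) = gaussianReal m v := by
  rw [show (fun t => √v * t + m) = (· + m) ∘ (√v * ·) from rfl,
    ← Measure.map_map (measurable_add_const m) (measurable_const_mul _),
    gaussianReal_map_const_mul, gaussianReal_map_add_const]
  congr 1
  · ring
  · ext; simp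

lemma integral_gaussianReal_eq_integral_affine {E : Type*} [NormedAddCommGroup E]
    [NormedSpace ℝ E] (f : ℝ → E) (m : ℝ) {v : ℝ≥0} (hv : v ≠ 0) :
    ∫ z, f z ∂gaussianReal m v = ∫ t, f (√v * t + m) ∂gaussianReal 0 1 := by
  have hs : √(v : ℝ) ≠ 0 := by positivity
  let e : ℝ ≃ᵐ ℝ := (Homeomorph.mulLeft₀ _ hs |>.trans (Homeomorph.addRight m)).toMeasurableEquiv
  rw [← gaussianReal_zero_one_map_affine m v]
  exact e.measurableEmbedding.integral_map f

lemma cdf_gaussianReal (m : ℝ) {v : ℝ≥0} (hv : v ≠ 0) (z : ℝ) :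
    cdf (gaussianReal m v) z = stdGaussianCDF ((z - m) / √v) := by
  have hs : 0 < √(v : ℝ) := by positivity
  rw [cdf_eq_real, ← gaussianReal_zero_one_map_affine m v,
    map_measureReal_apply (by fun_prop) measurableSet_Iic, stdGaussianCDF, ← measureReal_def]
  congr 1
  ext t
  simp only [mem_preimage, mem_Iic, le_div_iff₀ hs]
  constructor <;> intro h <;> linarith

lemma integral_sq_stdGaussianCDF_shift_neg (c : ℝ) :
    ∫ t, (stdGaussianCDF t - stdGaussianCDF (t - c)) ^ 2 ∂gaussianReal 0 1
      = ∫ t, (stdGaussianCDF t - stdGaussianCDF (t + c)) ^ 2 ∂gaussianReal 0 1 := by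
  calc _ = ∫ t, (stdGaussianCDF (-t) - stdGaussianCDF (-t - c)) ^ 2 ∂gaussianReal 0 1 := by
        conv_lhs => rw [← neg_zero, ← gaussianReal_map_neg]
        exact (MeasurableEquiv.neg ℝ).measurableEmbedding.integral_map _
    _ = _ := by
        congr with t
        rw [show -t - c = -(t + c) by ring, stdGaussianCDF_neg, stdGaussianCDF_neg]
        ring

lemma integrable_sq_cdf_sub_cdf (ν₁ ν₂ ρ : Measure ℝ) [IsFiniteMeasure ρ] :
    Integrable (fun z => (cdf ν₁ z - cdf ν₂ z) ^ 2) ρ := by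
  refine Integrable.of_bound (C := 1) ?_ (ae_of_all _ fun z => ?_)
  · exact (((monotone_cdf ν₁).measurable.sub (monotone_cdf ν₂).measurable).pow_const 2)
      |>.aestronglyMeasurable
  · rw [norm_pow, Real.norm_eq_abs]
    exact pow_le_one₀ (abs_nonneg _) (abs_sub_le_of_nonneg_of_le (cdf_nonneg _ z)
      (cdf_le_one _ z) (cdf_nonneg _ z) (cdf_le_one _ z))

lemma integral_ofReal_smul_add_ofReal_smul {α E : Type*} [MeasurableSpace α]
    [NormedAddCommGroup E] [NormedSpace ℝ E] {ν₁ ν₂ : Measure α} {f : α → E} {p₁ p₂ : ℝ}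
    (hp₁ : 0 ≤ p₁) (hp₂ : 0 ≤ p₂) (h₁ : Integrable f ν₁) (h₂ : Integrable f ν₂) :
    ∫ x, f x ∂(ENNReal.ofReal p₁ • ν₁ + ENNReal.ofReal p₂ • ν₂)
      = p₁ • ∫ x, f x ∂ν₁ + p₂ • ∫ x, f x ∂ν₂ := by
  rw [integral_add_measure (h₁.smul_measure ENNReal.ofReal_ne_top)
    (h₂.smul_measure ENNReal.ofReal_ne_top), integral_smul_measure, integral_smul_measure,
    ENNReal.toReal_ofReal hp₁, ENNReal.toReal_ofReal hp₂]

lemma integral_sq_sub_weighted_mean {α : Type*} [MeasurableSpace α] (ν : Measure α)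
    {f g F : α → ℝ} {p₁ p₂ : ℝ} (hsum : p₁ + p₂ = 1) (hF : ∀ x, F x = p₁ * f x + p₂ * g x) :
    p₁ * ∫ x, (f x - F x) ^ 2 ∂ν + p₂ * ∫ x, (g x - F x) ^ 2 ∂ν
      = p₁ * p₂ * ∫ x, (f x - g x) ^ 2 ∂ν := by
  obtain rfl : p₁ = 1 - p₂ := by linarith
  have hf : ∀ x, (f x - F x) ^ 2 = p₂ ^ 2 * (f x - g x) ^ 2 := fun x => by rw [hF]; ring
  have hg : ∀ x, (g x - F x) ^ 2 = (1 - p₂) ^ 2 * (f x - g x) ^ 2 := fun x => by rw [hF]; ring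
  simp only [hf, hg, integral_const_mul]
  ring

lemma integral_sq_cdf_sub_cdf_gaussianReal (m : ℝ) {v : ℝ≥0} (hv : v ≠ 0) :
    ∫ z, (cdf (gaussianReal m v) z - cdf (gaussianReal (-m) v) z) ^ 2 ∂gaussianReal m v
      = ∫ t, (stdGaussianCDF t - stdGaussianCDF (t + 2 * (m / √v))) ^ 2 ∂gaussianReal 0 1 := by
  have hs : √(v : ℝ) ≠ 0 := by positivity
  rw [integral_gaussianReal_eq_integral_affine _ m hv]
  congr with t
  rw [cdf_gaussianReal m hv, cdf_gaussianReal (-m) hv]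
  congr 3 <;> field_simp <;> ring

lemma integral_sq_cdf_sub_cdf_gaussianReal_neg (m : ℝ) {v : ℝ≥0} (hv : v ≠ 0) :
    ∫ z, (cdf (gaussianReal m v) z - cdf (gaussianReal (-m) v) z) ^ 2 ∂gaussianReal (-m) v
      = ∫ t, (stdGaussianCDF t - stdGaussianCDF (t + 2 * (m / √v))) ^ 2 ∂gaussianReal 0 1 := by
  have h := integral_sq_cdf_sub_cdf_gaussianReal (-m) hv
  simp only [neg_neg, neg_div, mul_neg, ← sub_eq_add_neg,
    integral_sq_stdGaussianCDF_shift_neg] at h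
  rw [← h]
  congr with z
  ring

/-- The mean-variance index of the projection `βᵀX` in the two-class Gaussian model,
the central computation of the proof of Theorem 2 of the paper. -/
theorem mv_index_two_class_gaussian {p : ℕ}
    (Sig : Matrix (Fin p) (Fin p) ℝ) (hSig : Sig.PosDef)
    (μ : Fin p → ℝ)
    (p₁ p₂ : ℝ) (hp₁ : 0 < p₁) (hp₂ : 0 < p₂) (hsum : p₁ + p₂ = 1)
    (β : Fin p → ℝ) (hβ : β ≠ 0)
    (a : ℝ) (ha : a = β ⬝ᵥ μ / Real.sqrt (β ⬝ᵥ Sig.mulVec β))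
    (F₁ F₂ F : ℝ → ℝ)
    (hF₁ : ∀ z, F₁ z =
      ((gaussianReal (β ⬝ᵥ μ) ((β ⬝ᵥ Sig.mulVec β).toNNReal)) (Set.Iic z)).toReal)
    (hF₂ : ∀ z, F₂ z =
      ((gaussianReal (-(β ⬝ᵥ μ)) ((β ⬝ᵥ Sig.mulVec β).toNNReal)) (Set.Iic z)).toReal)
    (hF : ∀ z, F z = p₁ * F₁ z + p₂ * F₂ z)
    (ν : Measure ℝ)
    (hν : ν = ENNReal.ofReal p₁ • gaussianReal (β ⬝ᵥ μ) ((β ⬝ᵥ Sig.mulVec β).toNNReal)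
            + ENNReal.ofReal p₂ • gaussianReal (-(β ⬝ᵥ μ)) ((β ⬝ᵥ Sig.mulVec β).toNNReal)) :
    p₁ * ∫ z, (F₁ z - F z) ^ 2 ∂ν + p₂ * ∫ z, (F₂ z - F z) ^ 2 ∂ν
      = p₁ * p₂ *
        ∫ t, (stdGaussianCDF t - stdGaussianCDF (t + 2 * a)) ^ 2 ∂(gaussianReal 0 1) := by
  set m := β ⬝ᵥ μ
  have hpos : 0 < β ⬝ᵥ Sig *ᵥ β := hSig.dotProduct_mulVec_pos hβ
  set v := (β ⬝ᵥ Sig *ᵥ β).toNNReal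
  have hv : v ≠ 0 := by simpa [v] using hpos
  have ha : a = m / √v := by rw [ha, Real.coe_toNNReal _ hpos.le]
  obtain rfl : F₁ = cdf (gaussianReal m v) :=
    funext fun z => (hF₁ z).trans (cdf_eq_real _ z).symm
  obtain rfl : F₂ = cdf (gaussianReal (-m) v) :=
    funext fun z => (hF₂ z).trans (cdf_eq_real _ z).symm
  rw [integral_sq_sub_weighted_mean ν hsum hF, hν,
    integral_ofReal_smul_add_ofReal_smul hp₁.le hp₂.le (integrable_sq_cdf_sub_cdf _ _ _)
      (integrable_sq_cdf_sub_cdf _ _ _),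
    integral_sq_cdf_sub_cdf_gaussianReal m hv, integral_sq_cdf_sub_cdf_gaussianReal_neg m hv,
    smul_eq_mul, smul_eq_mul, ← add_mul, hsum, one_mul, ha]
end

section
/- Let (Ω, ℱ, P) be a probability space whose underlying space is standard Borel, X : Ω → ℝ^p a random vector, Y a random element taking values in a standard Borel space, B : ℝ^p → ℝ^k a linear map, and γ ∈ ℝ^p. If (i) Y and X are conditionally independent given B X, and (ii) the random variable ⟪γ, X⟫ is independent of the random vector B X, then ⟪γ, X⟫ is independent of Y. -/
/-!
Conditioning on `BX` and then integrating: conditional independence factorises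
`P⟦W ∈ s, Y ∈ t | BX⟧` as `P⟦Y ∈ t | BX⟧ * P⟦W ∈ s | BX⟧` for `W = ⟪γ, X⟫`, and independence of
`W` from `BX` makes the second factor the constant `P(W ∈ s)`. Taking expectations gives
`P(W ∈ s, Y ∈ t) = P(Y ∈ t) P(W ∈ s)`.
-/

open MeasureTheory ProbabilityTheory RealInnerProductSpace

namespace ProbabilityTheory

variable {Ω : Type*} {m₁ m₂ m' mΩ : MeasurableSpace Ω} {μ : Measure Ω}

lemma condExp_indicator_ae_eq_measureReal_of_indep [IsFiniteMeasure μ]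
    (hm₁ : m₁ ≤ mΩ) (hm' : m' ≤ mΩ) (hind : Indep m₁ m' μ) {s : Set Ω}
    (hs : MeasurableSet[m₁] s) :
    μ⟦s | m'⟧ =ᵐ[μ] fun _ => μ.real s := by
  refine (condExp_indep_eq hm₁ hm' (stronglyMeasurable_const.indicator hs) hind).trans ?_
  rw [integral_indicator (hm₁ s hs), setIntegral_const, smul_eq_mul, mul_one]

lemma integral_condExp_indicator_eq_measureReal [IsFiniteMeasure μ] (hm' : m' ≤ mΩ)
    {s : Set Ω} (hs : MeasurableSet s) :
    ∫ ω, (μ⟦s | m'⟧) ω ∂μ = μ.real s := by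
  rw [integral_condExp hm', integral_indicator hs, setIntegral_const, smul_eq_mul, mul_one]

/-- A weak form of the contraction property of conditional independence. -/
theorem CondIndep.indep_of_indep_right [StandardBorelSpace Ω] [IsFiniteMeasure μ]
    (hm₁ : m₁ ≤ mΩ) (hm₂ : m₂ ≤ mΩ) (hm' : m' ≤ mΩ)
    (hCI : CondIndep m' m₁ m₂ hm' μ) (hind : Indep m₂ m' μ) :
    Indep m₁ m₂ μ := by
  rw [Indep_iff]
  intro s t hs ht
  have hfactor := (condIndep_iff m' m₁ m₂ hm' hm₁ hm₂ μ).1 hCI s t hs ht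
  have hconst := condExp_indicator_ae_eq_measureReal_of_indep hm₂ hm' hind ht
  have hreal : μ.real (s ∩ t) = μ.real s * μ.real t := calc
    μ.real (s ∩ t) = ∫ ω, (μ⟦s ∩ t | m'⟧) ω ∂μ :=
      (integral_condExp_indicator_eq_measureReal hm' ((hm₁ s hs).inter (hm₂ t ht))).symm
    _ = ∫ ω, (μ⟦s | m'⟧) ω * μ.real t ∂μ := by
      refine integral_congr_ae ?_
      filter_upwards [hfactor, hconst] with ω hω hω'
      rw [hω, Pi.mul_apply, hω']
    _ = μ.real s * μ.real t := by
      rw [integral_mul_const, integral_condExp_indicator_eq_measureReal hm' (hm₁ s hs)]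
  rwa [measureReal_def, measureReal_def, measureReal_def, ← ENNReal.toReal_mul,
    ENNReal.toReal_eq_toReal_iff' (measure_ne_top _ _)
      (ENNReal.mul_ne_top (measure_ne_top _ _) (measure_ne_top _ _))] at hreal

end ProbabilityTheory

theorem proj_indep_of_condIndep_index_model_general
    {Ω 𝒴 : Type*}
    [MeasurableSpace Ω] [StandardBorelSpace Ω]
    [MeasurableSpace 𝒴]
    (P : Measure Ω) [IsProbabilityMeasure P]
    {p k : ℕ} (X : Ω → EuclideanSpace ℝ (Fin p)) (Y : Ω → 𝒴)
    (hX : Measurable X) (hY : Measurable Y)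
    (B : EuclideanSpace ℝ (Fin p) →ₗ[ℝ] EuclideanSpace ℝ (Fin k))
    (γ : EuclideanSpace ℝ (Fin p))
    (hCI : CondIndepFun (MeasurableSpace.comap (fun ω => B (X ω)) inferInstance)
      (Measurable.comap_le ((B.continuous_of_finiteDimensional.measurable).comp hX)) Y X P)
    (hind : IndepFun (fun ω => ⟪γ, X ω⟫) (fun ω => B (X ω)) P) :
    IndepFun (fun ω => ⟪γ, X ω⟫) Y P := by
  have hproj : Measurable fun x : EuclideanSpace ℝ (Fin p) => ⟪γ, x⟫ :=
    measurable_const.inner measurable_id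
  have hCI_proj := hCI.comp measurable_id hproj
  rw [condIndepFun_iff_condIndep] at hCI_proj
  rw [IndepFun_iff_Indep] at hind ⊢
  exact (hCI_proj.indep_of_indep_right hY.comap_le (hproj.comp hX).comap_le _ hind).symm

/-- Key probabilistic claim of Section 3.2 of the paper: under the index model
`Y ⫫ X | BX`, any direction `γ` with `⟪γ, X⟫ ⫫ BX` satisfies `⟪γ, X⟫ ⫫ Y`. -/
theorem proj_indep_of_condIndep_index_model
    {Ω 𝒴 : Type*}
    [MeasurableSpace Ω] [StandardBorelSpace Ω] [Nonempty Ω]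
    [MeasurableSpace 𝒴] [StandardBorelSpace 𝒴]
    (P : Measure Ω) [IsProbabilityMeasure P]
    {p k : ℕ} (X : Ω → EuclideanSpace ℝ (Fin p)) (Y : Ω → 𝒴)
    (hX : Measurable X) (hY : Measurable Y)
    (B : EuclideanSpace ℝ (Fin p) →ₗ[ℝ] EuclideanSpace ℝ (Fin k))
    (γ : EuclideanSpace ℝ (Fin p))
    (hCI : CondIndepFun (MeasurableSpace.comap (fun ω => B (X ω)) inferInstance)
      (Measurable.comap_le ((B.continuous_of_finiteDimensional.measurable).comp hX)) Y X P)
    (hind : IndepFun (fun ω => ⟪γ, X ω⟫) (fun ω => B (X ω)) P) :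
    IndepFun (fun ω => ⟪γ, X ω⟫) Y P :=
  proj_indep_of_condIndep_index_model_general P X Y hX hY B γ hCI hind
end

section
/- Let q ∈ ℕ, θ₀ ∈ ℝ^q, ρ > 0, and let L, L̃ : ℝ^q → ℝ be three times continuously differentiable on the closed ball B̄(θ₀, ρ). Assume: (i) ∇L(θ₀) = 0; (ii) there is c > 0 with u^T ∇²L(θ₀) u ≤ −c‖u‖² for all u ∈ ℝ^q; (iii) the operator norm ‖∇²L̃(θ₀) − ∇²L(θ₀)‖ ≤ c/4; (iv) the third-order derivative of L has norm bounded by M₁ on B̄(θ₀, ρ) and the third-order derivative of L − L̃ has norm bounded by M₂ on B̄(θ₀, ρ); (v) K > 0 and α > 0 satisfy ‖∇L̃(θ₀)‖ ≤ K·α. Then there exist constants C > 0 and α₀ > 0, depending only on c, K, M₁, M₂ and ρ, such that for every α ∈ (0, α₀]: L̃(θ₀ + α·u) < L̃(θ₀) for all u with ‖u‖ = C, and consequently L̃ attains a local maximum at some point θ̂ with ‖θ̂ − θ₀‖ ≤ C·α. -/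
/-!
Taylor's formula with integral remainder bounds `L̃ (θ₀ + v) - L̃ θ₀` on the sphere `‖v‖ = r` by
`‖∇L̃ θ₀‖ r - (3c/8) r² + (M₁ + M₂) r³ / 2`: the Hessian of `L̃` is still `(3c/4)`-negative
definite, and the third derivative of `L̃ = L - (L - L̃)` is bounded by `M₁ + M₂`. With
`r = 8Kα/c` the gradient term is at most `c r² / 8`, so for small `α` the values on the sphere lie
strictly below the value at the centre, and the maximum of `L̃` over the closed ball is attained
at an interior point, which is a local maximizer.
-/

open Metric Set

section Taylor

variable {E F : Type*} [NormedAddCommGroup E] [NormedSpace ℝ E]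
  [NormedAddCommGroup F] [NormedSpace ℝ F] [CompleteSpace F]

theorem norm_taylor_two_remainder_le {f : E → F} {x y : E} {M : ℝ}
    (hf : ∀ t ∈ Icc (0 : ℝ) 1, ContDiffAt ℝ 3 f (x + t • y))
    (hM : ∀ t ∈ Icc (0 : ℝ) 1, ‖iteratedFDeriv ℝ 3 f (x + t • y)‖ ≤ M) :
    ‖f (x + y) - f x - fderiv ℝ f x y - (1 / 2 : ℝ) • iteratedFDeriv ℝ 2 f x (fun _ ↦ y)‖
      ≤ M / 2 * ‖y‖ ^ 3 := by
  have hrem : ‖∫ t in 0..1, (1 - t) ^ 2 • iteratedFDeriv ℝ 3 f (x + t • y) (fun _ ↦ y)‖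
      ≤ M * ‖y‖ ^ 3 := by
    refine (intervalIntegral.norm_integral_le_of_norm_le_const (C := M * ‖y‖ ^ 3)
      fun t ht ↦ ?_).trans_eq (by simp)
    rw [uIoc_of_le zero_le_one] at ht
    have hweight : (1 - t) ^ 2 ≤ 1 := by nlinarith [ht.1, ht.2]
    calc ‖(1 - t) ^ 2 • iteratedFDeriv ℝ 3 f (x + t • y) (fun _ ↦ y)‖
        ≤ 1 * (‖iteratedFDeriv ℝ 3 f (x + t • y)‖ * ‖y‖ ^ 3) := by
          rw [norm_smul, Real.norm_of_nonneg (sq_nonneg _)]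
          gcongr
          simpa using (iteratedFDeriv ℝ 3 f (x + t • y)).le_opNorm fun _ ↦ y
      _ ≤ M * ‖y‖ ^ 3 := by
          rw [one_mul]; gcongr; exact hM t (Ioc_subset_Icc_self ht)
  rw [map_add_eq_sum_add_integral_iteratedFDeriv (n := 2) hf]
  simp only [Finset.sum_range_succ, Finset.range_one, Finset.sum_singleton, Nat.factorial,
    Nat.cast_one, inv_one, iteratedFDeriv_zero_apply, one_smul, iteratedFDeriv_one_apply]
  calc _ = ‖(2⁻¹ : ℝ) •
          ∫ t in 0..1, (1 - t) ^ 2 • iteratedFDeriv ℝ 3 f (x + t • y) (fun _ ↦ y)‖ := by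
        congr 1; norm_num; abel
    _ ≤ M / 2 * ‖y‖ ^ 3 := by
        rw [norm_smul, Real.norm_of_nonneg (by norm_num)]; linarith

theorem apply_two_le_of_norm_sub_le {Q Q' : E [×2]→L[ℝ] ℝ} {c δ : ℝ}
    (hQ : ∀ u, Q ![u, u] ≤ -c * ‖u‖ ^ 2) (hδ : ‖Q' - Q‖ ≤ δ) (u : E) :
    Q' ![u, u] ≤ -(c - δ) * ‖u‖ ^ 2 := by
  have hdiff : (Q' - Q) ![u, u] ≤ δ * ‖u‖ ^ 2 :=
    calc (Q' - Q) ![u, u] ≤ ‖Q' - Q‖ * ‖u‖ ^ 2 := by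
          simpa [Fin.prod_univ_two, sq] using (le_abs_self _).trans ((Q' - Q).le_opNorm ![u, u])
      _ ≤ δ * ‖u‖ ^ 2 := by gcongr
  have := hQ u
  rw [sub_apply] at hdiff
  linarith

theorem apply_lt_apply_center_of_mem_sphere {f : E → ℝ} {x₀ x : E} {r M c : ℝ} (hr : 0 < r)
    (hf : ∀ y ∈ closedBall x₀ r, ContDiffAt ℝ 3 f y)
    (hM : ∀ y ∈ closedBall x₀ r, ‖iteratedFDeriv ℝ 3 f y‖ ≤ M)
    (hHess : ∀ u, iteratedFDeriv ℝ 2 f x₀ ![u, u] ≤ -c * ‖u‖ ^ 2)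
    (hsmall : ‖fderiv ℝ f x₀‖ + M / 2 * r ^ 2 < c / 2 * r) (hx : x ∈ sphere x₀ r) :
    f x < f x₀ := by
  set v := x - x₀
  have hv : ‖v‖ = r := mem_sphere_iff_norm.1 hx
  have hseg : ∀ t ∈ Icc (0 : ℝ) 1, x₀ + t • v ∈ closedBall x₀ r := fun t ht ↦ by
    rw [mem_closedBall_iff_norm, add_sub_cancel_left, norm_smul, hv, Real.norm_of_nonneg ht.1]
    nlinarith [ht.2]
  have htaylor := norm_taylor_two_remainder_le (fun t ht ↦ hf _ (hseg t ht))
    (fun t ht ↦ hM _ (hseg t ht))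
  rw [add_sub_cancel, show (fun _ : Fin 2 ↦ v) = ![v, v] by ext i; fin_cases i <;> rfl,
    Real.norm_eq_abs, abs_le, hv, smul_eq_mul] at htaylor
  have hgrad : fderiv ℝ f x₀ v ≤ ‖fderiv ℝ f x₀‖ * r :=
    hv ▸ (le_abs_self _).trans ((fderiv ℝ f x₀).le_opNorm v)
  have hquad := hHess v
  rw [hv] at hquad
  nlinarith [htaylor.2, mul_lt_mul_of_pos_left hsmall hr]

end Taylor

theorem norm_iteratedFDeriv_le_add_norm_iteratedFDeriv_sub {𝕜 E F : Type*}
    [NontriviallyNormedField 𝕜] [NormedAddCommGroup E] [NormedSpace 𝕜 E]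
    [NormedAddCommGroup F] [NormedSpace 𝕜 F] {f g : E → F} {x : E} {n : ℕ}
    (hf : ContDiffAt 𝕜 n f x) (hg : ContDiffAt 𝕜 n g x) :
    ‖iteratedFDeriv 𝕜 n g x‖ ≤
      ‖iteratedFDeriv 𝕜 n f x‖ + ‖iteratedFDeriv 𝕜 n (fun y ↦ f y - g y) x‖ := by
  rw [fun_iteratedFDeriv_sub_apply hf hg]
  exact norm_le_norm_add_norm_sub _ _

theorem exists_isLocalMax_mem_ball_of_lt_on_sphere {X β : Type*} [PseudoMetricSpace X]
    [ProperSpace X] [LinearOrder β] [TopologicalSpace β] [ClosedIciTopology β]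
    {f : X → β} {x₀ : X} {r : ℝ} (hr : 0 ≤ r) (hf : ContinuousOn f (closedBall x₀ r))
    (hsphere : ∀ x ∈ sphere x₀ r, f x < f x₀) : ∃ x ∈ ball x₀ r, IsLocalMax f x := by
  obtain ⟨x, hx, hmax⟩ :=
    (isCompact_closedBall x₀ r).exists_isMaxOn ⟨x₀, mem_closedBall_self hr⟩ hf
  have hx_ball : x ∈ ball x₀ r := by
    refine (mem_closedBall.1 hx).lt_of_ne fun hdist ↦ ?_
    exact (hsphere x hdist).not_ge (hmax (mem_closedBall_self hr))
  exact ⟨x, hx_ball, hmax.isLocalMax (closedBall_mem_nhds_of_mem hx_ball)⟩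

/-- Deterministic core of the proof of Theorem 6 of the paper: a third-order Taylor
expansion around a strict local maximizer `θ₀` of `L` yields, for the perturbed
objective `L̃`, a local maximizer within distance `C·α` of `θ₀`, with constants
depending only on `c`, `K`, `M₁`, `M₂` and `ρ`. -/
theorem empirical_local_max_rate (c K M₁ M₂ ρ : ℝ)
    (hc : 0 < c) (hK : 0 < K) (hρ : 0 < ρ) :
    ∃ C > (0 : ℝ), ∃ α₀ > (0 : ℝ),
      ∀ (q : ℕ) (θ₀ : EuclideanSpace ℝ (Fin q))
        (L Lt : EuclideanSpace ℝ (Fin q) → ℝ) (α : ℝ),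
        ContDiffOn ℝ 3 L (closedBall θ₀ ρ) →
        ContDiffOn ℝ 3 Lt (closedBall θ₀ ρ) →
        fderiv ℝ L θ₀ = 0 →
        (∀ u : EuclideanSpace ℝ (Fin q),
          (iteratedFDeriv ℝ 2 L θ₀) ![u, u] ≤ -c * ‖u‖ ^ 2) →
        ‖iteratedFDeriv ℝ 2 Lt θ₀ - iteratedFDeriv ℝ 2 L θ₀‖ ≤ c / 4 →
        (∀ θ ∈ closedBall θ₀ ρ, ‖iteratedFDeriv ℝ 3 L θ‖ ≤ M₁) →
        (∀ θ ∈ closedBall θ₀ ρ,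
          ‖iteratedFDeriv ℝ 3 (fun x => L x - Lt x) θ‖ ≤ M₂) →
        0 < α → α ≤ α₀ → ‖fderiv ℝ Lt θ₀‖ ≤ K * α →
        (∀ u : EuclideanSpace ℝ (Fin q), ‖u‖ = C → Lt (θ₀ + α • u) < Lt θ₀) ∧
        ∃ θhat : EuclideanSpace ℝ (Fin q),
          ‖θhat - θ₀‖ ≤ C * α ∧ IsLocalMax Lt θhat := by
  -- `α₀` is chosen so that `r = C α ≤ r₀` keeps `closedBall θ₀ r` inside `ball θ₀ ρ` and
  -- `(M₁ + M₂) r < c / 2`.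
  set r₀ := min (ρ / 2) (c / (2 * (|M₁ + M₂| + 1)))
  refine ⟨8 * K / c, by positivity, r₀ / (8 * K / c), by positivity, ?_⟩
  intro q θ₀ L Lt α hL hLt _ hHess hHd hM₁ hM₂ hα hαα₀ hgrad
  set r := 8 * K / c * α
  have hr : 0 < r := by positivity
  have hrr₀ : r ≤ r₀ := (le_div_iff₀' (by positivity)).1 hαα₀
  have hrρ : r < ρ := by linarith [min_le_left (ρ / 2) (c / (2 * (|M₁ + M₂| + 1)))]
  have hMr : (M₁ + M₂) * r < c / 2 := by
    have hr₀ : r₀ * (2 * (|M₁ + M₂| + 1)) ≤ c :=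
      (le_div_iff₀ (by positivity)).1 (min_le_right _ _)
    nlinarith [le_abs_self (M₁ + M₂), abs_nonneg (M₁ + M₂)]
  have hcd : ∀ {g : EuclideanSpace ℝ (Fin q) → ℝ}, ContDiffOn ℝ 3 g (closedBall θ₀ ρ) →
      ∀ y ∈ closedBall θ₀ r, ContDiffAt ℝ 3 g y :=
    fun hg y hy ↦ hg.contDiffAt (closedBall_mem_nhds_of_mem
      (mem_ball.2 ((mem_closedBall.1 hy).trans_lt hrρ)))
  have hsub : closedBall θ₀ r ⊆ closedBall θ₀ ρ := closedBall_subset_closedBall hrρ.le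
  have hsphere : ∀ x ∈ sphere θ₀ r, Lt x < Lt θ₀ := fun x hx ↦ by
    refine apply_lt_apply_center_of_mem_sphere hr (hcd hLt) (M := M₁ + M₂) (fun y hy ↦ ?_)
      (apply_two_le_of_norm_sub_le hHess hHd) ?_ hx
    · exact (norm_iteratedFDeriv_le_add_norm_iteratedFDeriv_sub (hcd hL y hy)
        (hcd hLt y hy)).trans (add_le_add (hM₁ y (hsub hy)) (hM₂ y (hsub hy)))
    · have hKα : K * α = c / 8 * r := by simp only [r]; field_simp
      nlinarith [mul_lt_mul_of_pos_right hMr hr]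
  refine ⟨fun u hu ↦ hsphere _ ?_, ?_⟩
  · rw [mem_sphere_iff_norm, add_sub_cancel_left, norm_smul, hu, Real.norm_of_nonneg hα.le,
      mul_comm]
  · obtain ⟨θhat, hθhat, hmax⟩ :=
      exists_isLocalMax_mem_ball_of_lt_on_sphere hr.le (hLt.continuousOn.mono hsub) hsphere
    exact ⟨θhat, (mem_ball_iff_norm.1 hθhat).le, hmax⟩
end
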